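/- Let T ∈ ℝ, μ > 0 and y₀ ∈ ℝ. For t < T define y*(t) = μπ(T−t)^{−1/2} + y₀ and ψ(t,y) = (T−t)^{−1}·G_1((y − y*(t))·(T−t)^{1/2}/μ) for y ∈ ℝ, where G_1(Z) = cos²(Z/2) for |Z| ≤ π and G_1(Z) = 0 otherwise. Then for every t < T and every y ∈ ℝ, ψ is differentiable in t and in y at (t,y), and ∂_t ψ(t,y) − ψ(t,y)² + (∫_{−∞}^y ψ(t,ỹ) dỹ)·∂_y ψ(t,y) = 0. In particular ψ is a backward self-similar solution of the inviscid reduced Prandtl equation blowing up at time T. -/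

import Mathlib

/-
For `t < T` the solution is `ψ(t, y) = (T - t)⁻¹ H(ξ)` with `ξ = (y - y₀)√(T - t)/μ` and
`H ξ = G₁(ξ - π)`. With `F` the primitive of `H` vanishing at `-∞`, the time derivative, the
nonlocal integral and the space derivative all scale so that the equation becomes
`(T - t)⁻² (H - H² + H' (F - ξ/2)) = 0`, a profile ODE in `ξ` alone.

Writing `c` for `Z` clamped to `[-π, π]`, one has `G₁ Z = (1 + cos c)/2`, `G₁' Z = -sin c/2` and
`∫_{-∞}^Z G₁ = (c + π)/2 + sin c/2`. The clamp does not spoil differentiability because the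
derivatives of these expressions in `c` vanish at `c = ±π`, and via `sin² + cos² = 1` the profile
ODE reduces to `sin c · (c - Z) = 0`, true since `c = Z` or `sin c = 0`.
-/

open Real MeasureTheory Set

/-- The stable self-similar blow-up profile `G₁(Z) = cos²(Z/2)` for `|Z| ≤ π`, `0` otherwise. -/
noncomputable def G1 (Z : ℝ) : ℝ := if |Z| ≤ π then Real.cos (Z / 2) ^ 2 else 0

/-- The backward self-similar solution
`ψ(t,y) = (T−t)⁻¹ G₁((y − y*(t)) (T−t)^{1/2}/μ)` with `y*(t) = μπ(T−t)^{−1/2} + y₀`. -/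
noncomputable def ψfun (T μ y₀ t y : ℝ) : ℝ :=
  (T - t)⁻¹ *
    G1 ((y - (μ * π * (T - t) ^ (-(1:ℝ) / 2) + y₀)) * Real.sqrt (T - t) / μ)

open Filter Topology Asymptotics

theorem HasDerivAt.comp_lipschitzWith_of_zero {𝕜 F : Type*} [NontriviallyNormedField 𝕜]
    [NormedAddCommGroup F] [NormedSpace 𝕜 F] {g : 𝕜 → F} {φ : 𝕜 → 𝕜} {K : NNReal} {x : 𝕜}
    (hg : HasDerivAt g 0 (φ x)) (hφ : LipschitzWith K φ) : HasDerivAt (fun z => g (φ z)) 0 x := by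
  rw [hasDerivAt_iff_isLittleO] at hg ⊢
  simp only [smul_zero, sub_zero] at hg ⊢
  have hφO : (fun z => φ z - φ x) =O[𝓝 x] fun z => z - x :=
    IsBigO.of_bound K (Eventually.of_forall fun z => by
      simpa [dist_eq_norm] using hφ.dist_le_mul z x)
  exact (hg.comp_tendsto (hφ.continuous.tendsto x)).trans_isBigO hφO

theorem hasDerivAt_comp_projIcc {a b : ℝ} (hab : a ≤ b) {g g' : ℝ → ℝ}
    (hg : ∀ c ∈ Icc a b, HasDerivAt g (g' c) c) (ha : g' a = 0) (hb : g' b = 0) (x : ℝ) :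
    HasDerivAt (fun x => g (projIcc a b hab x)) (g' (projIcc a b hab x)) x := by
  by_cases hx : x ∈ Ioo a b
  · have hloc : (fun x => g (projIcc a b hab x)) =ᶠ[𝓝 x] g := by
      filter_upwards [Ioo_mem_nhds hx.1 hx.2] with z hz
      rw [projIcc_of_mem hab (Ioo_subset_Icc_self hz)]
    rw [projIcc_of_mem hab (Ioo_subset_Icc_self hx)]
    exact (hg x (Ioo_subset_Icc_self hx)).congr_of_eventuallyEq hloc
  · have hend : g' (projIcc a b hab x) = 0 := by
      rcases le_or_gt x a with h | h
      · rw [projIcc_of_le_left hab h]; exact ha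
      · rw [projIcc_of_right_le hab (not_lt.mp fun h' => hx ⟨h, h'⟩)]; exact hb
    have hg₀ := hg _ (projIcc a b hab x).2
    rw [hend] at hg₀ ⊢
    exact hg₀.comp_lipschitzWith_of_zero (φ := fun z => (projIcc a b hab z : ℝ))
      ((LipschitzWith.subtype_val _).comp (LipschitzWith.projIcc hab))

noncomputable def similarityVar (T μ y₀ t y : ℝ) : ℝ := (y - y₀) * √(T - t) / μ

noncomputable def selfSimilar (H : ℝ → ℝ) (T μ y₀ t y : ℝ) : ℝ :=
  (T - t)⁻¹ * H (similarityVar T μ y₀ t y)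

section SelfSimilar

variable {H H' F : ℝ → ℝ} {T μ y₀ t y : ℝ}

lemma hasDerivAt_similarityVar_time (ht : t < T) :
    HasDerivAt (fun s => similarityVar T μ y₀ s y)
      (-similarityVar T μ y₀ t y / (2 * (T - t))) t := by
  have hτ : 0 < T - t := sub_pos.mpr ht
  have hsqrt : HasDerivAt (fun s => √(T - s)) (1 / (2 * √(T - t)) * -1) t :=
    (hasDerivAt_sqrt hτ.ne').comp t ((hasDerivAt_id' t).const_sub T)
  refine ((hsqrt.const_mul (y - y₀)).div_const μ).congr_deriv ?_
  rw [similarityVar]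
  field_simp
  rw [sq_sqrt hτ.le]

lemma hasDerivAt_similarityVar_space :
    HasDerivAt (similarityVar T μ y₀ t) (√(T - t) / μ) y :=
  ((((hasDerivAt_id' y).sub_const y₀).mul_const √(T - t)).div_const μ).congr_deriv (by ring)

variable (hH : ∀ Z, HasDerivAt H (H' Z) Z)
include hH

lemma hasDerivAt_selfSimilar_time (ht : t < T) :
    HasDerivAt (fun s => selfSimilar H T μ y₀ s y)
      ((T - t)⁻¹ ^ 2 * (H (similarityVar T μ y₀ t y)
        - H' (similarityVar T μ y₀ t y) * similarityVar T μ y₀ t y / 2)) t := by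
  have hτ : T - t ≠ 0 := (sub_pos.mpr ht).ne'
  have hinv : HasDerivAt (fun s => (T - s)⁻¹) (-(-1) / (T - t) ^ 2) t :=
    ((hasDerivAt_id' t).const_sub T).inv hτ
  refine (hinv.mul ((hH _).comp t (hasDerivAt_similarityVar_time ht))).congr_deriv ?_
  simp only [Function.comp_apply]
  field_simp
  ring

lemma hasDerivAt_selfSimilar_space :
    HasDerivAt (selfSimilar H T μ y₀ t)
      ((T - t)⁻¹ * (H' (similarityVar T μ y₀ t y) * (√(T - t) / μ))) y :=
  ((hH _).comp y hasDerivAt_similarityVar_space).const_mul _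

omit hH in
lemma integral_Iic_selfSimilar (hF : ∀ Z, HasDerivAt F (H Z) Z) (hHint : Integrable H)
    (hFbot : Tendsto F atBot (𝓝 0)) (hμ : 0 < μ) (ht : t < T) :
    ∫ z in Iic y, selfSimilar H T μ y₀ t z
      = (T - t)⁻¹ * (μ / √(T - t)) * F (similarityVar T μ y₀ t y) := by
  have hr : 0 < √(T - t) := sqrt_pos.mpr (sub_pos.mpr ht)
  have hvar : similarityVar T μ y₀ t = fun z => (z - y₀) * (√(T - t) / μ) := by
    ext z; rw [similarityVar, mul_div_assoc]
  have hderiv (z : ℝ) :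
      HasDerivAt (fun z => (T - t)⁻¹ * (μ / √(T - t)) * F (similarityVar T μ y₀ t z))
        (selfSimilar H T μ y₀ t z) z := by
    refine ((hF _).comp z hasDerivAt_similarityVar_space).const_mul _ |>.congr_deriv ?_
    rw [selfSimilar]
    field_simp
  have hint : Integrable (selfSimilar H T μ y₀ t) := by
    unfold selfSimilar
    rw [hvar]
    exact ((hHint.comp_mul_right' (div_pos hr hμ).ne').comp_sub_right y₀).const_mul _
  have hvar_bot : Tendsto (similarityVar T μ y₀ t) atBot atBot := by
    rw [hvar]
    exact (tendsto_atBot_add_const_right _ _ tendsto_id).atBot_mul_const (div_pos hr hμ)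
  have hlim := (hFbot.comp hvar_bot).const_mul ((T - t)⁻¹ * (μ / √(T - t)))
  rw [mul_zero] at hlim
  rw [integral_Iic_of_hasDerivAt_of_tendsto' (fun z _ => hderiv z) hint.integrableOn hlim,
    sub_zero]

lemma selfSimilar_residual_eq (hF : ∀ Z, HasDerivAt F (H Z) Z) (hHint : Integrable H)
    (hFbot : Tendsto F atBot (𝓝 0)) (hμ : 0 < μ) (ht : t < T) :
    deriv (fun s => selfSimilar H T μ y₀ s y) t - selfSimilar H T μ y₀ t y ^ 2
        + (∫ z in Iic y, selfSimilar H T μ y₀ t z) * deriv (selfSimilar H T μ y₀ t) y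
      = (T - t)⁻¹ ^ 2 * (H (similarityVar T μ y₀ t y) - H (similarityVar T μ y₀ t y) ^ 2
        + H' (similarityVar T μ y₀ t y)
          * (F (similarityVar T μ y₀ t y) - similarityVar T μ y₀ t y / 2)) := by
  have hr : 0 < √(T - t) := sqrt_pos.mpr (sub_pos.mpr ht)
  rw [(hasDerivAt_selfSimilar_time hH ht).deriv, (hasDerivAt_selfSimilar_space hH).deriv,
    integral_Iic_selfSimilar hF hHint hFbot hμ ht, selfSimilar]
  field_simp
  ring

end SelfSimilar

lemma neg_pi_le_pi : -π ≤ π := neg_le_self pi_nonneg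

noncomputable def clampPi (Z : ℝ) : ℝ := projIcc (-π) π neg_pi_le_pi Z

lemma clampPi_of_abs_le {Z : ℝ} (h : |Z| ≤ π) : clampPi Z = Z := by
  rw [clampPi, projIcc_of_mem _ (abs_le.mp h)]

lemma clampPi_eq_neg_pi_or_pi {Z : ℝ} (h : ¬|Z| ≤ π) : clampPi Z = -π ∨ clampPi Z = π := by
  rcases le_or_gt Z 0 with hZ | hZ
  · left
    rw [clampPi, projIcc_of_le_left _ (by linarith [abs_of_nonpos hZ, not_le.mp h])]
  · right
    rw [clampPi, projIcc_of_right_le _ (by linarith [abs_of_pos hZ, not_le.mp h])]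

lemma sin_clampPi_mul_sub_eq_zero (Z : ℝ) : sin (clampPi Z) * (clampPi Z - Z) = 0 := by
  by_cases h : |Z| ≤ π
  · rw [clampPi_of_abs_le h, sub_self, mul_zero]
  · rcases clampPi_eq_neg_pi_or_pi h with h' | h' <;> simp [h']

lemma hasDerivAt_comp_clampPi {g g' : ℝ → ℝ} (hg : ∀ c, HasDerivAt g (g' c) c)
    (hneg : g' (-π) = 0) (hpos : g' π = 0) (Z : ℝ) :
    HasDerivAt (fun Z => g (clampPi Z)) (g' (clampPi Z)) Z :=
  hasDerivAt_comp_projIcc neg_pi_le_pi (fun c _ => hg c) hneg hpos Z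

lemma G1_eq_clampPi (Z : ℝ) : G1 Z = (1 + cos (clampPi Z)) / 2 := by
  unfold G1
  split_ifs with h
  · rw [clampPi_of_abs_le h, cos_sq, mul_div_cancel₀ Z two_ne_zero]; ring
  · rcases clampPi_eq_neg_pi_or_pi h with h' | h' <;> simp [h']

noncomputable def G1deriv (Z : ℝ) : ℝ := -sin (clampPi Z) / 2

noncomputable def G1primitive (Z : ℝ) : ℝ := (clampPi Z + π) / 2 + sin (clampPi Z) / 2

lemma hasDerivAt_G1 (Z : ℝ) : HasDerivAt G1 (G1deriv Z) Z := by
  have hg (c : ℝ) : HasDerivAt (fun c => (1 + cos c) / 2) (-sin c / 2) c := by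
    simpa using ((hasDerivAt_cos c).const_add 1).div_const 2
  rw [show G1 = fun Z => (1 + cos (clampPi Z)) / 2 from funext G1_eq_clampPi]
  exact hasDerivAt_comp_clampPi hg (by simp) (by simp) Z

lemma hasDerivAt_G1primitive (Z : ℝ) : HasDerivAt G1primitive (G1 Z) Z := by
  have hg (c : ℝ) : HasDerivAt (fun c => (c + π) / 2 + sin c / 2) ((1 + cos c) / 2) c :=
    ((((hasDerivAt_id' c).add_const π).div_const 2).add
      ((hasDerivAt_sin c).div_const 2)).congr_deriv (by ring)
  rw [G1_eq_clampPi]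
  exact hasDerivAt_comp_clampPi hg (by simp) (by simp) Z

lemma integrable_G1 : Integrable G1 := by
  refine Continuous.integrable_of_hasCompactSupport
    (continuous_iff_continuousAt.mpr fun Z => (hasDerivAt_G1 Z).continuousAt)
    (HasCompactSupport.intro (isCompact_Icc (a := -π) (b := π)) fun Z hZ => ?_)
  rw [G1, if_neg (fun h => hZ (abs_le.mp h))]

lemma tendsto_G1primitive_atBot : Tendsto G1primitive atBot (𝓝 0) := by
  refine tendsto_const_nhds.congr' ?_
  filter_upwards [Iic_mem_atBot (-π)] with Z hZ
  rw [G1primitive, clampPi, projIcc_of_le_left _ hZ]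
  simp

/-- The profile equation of `selfSimilar_residual_eq` for `H ξ = G1 (ξ - π)`, at `Z = ξ - π`. -/
lemma G1_profile_eq (Z : ℝ) :
    G1 Z - G1 Z ^ 2 + G1deriv Z * (G1primitive Z - (Z + π) / 2) = 0 := by
  rw [G1_eq_clampPi, G1deriv, G1primitive]
  linear_combination (-1 / 4 : ℝ) * sin_clampPi_mul_sub_eq_zero Z
    - (1 / 4 : ℝ) * sin_sq_add_cos_sq (clampPi Z)

lemma ψfun_eq_selfSimilar {T μ y₀ t : ℝ} (hμ : μ ≠ 0) (ht : t < T) (y : ℝ) :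
    ψfun T μ y₀ t y = selfSimilar (fun ξ => G1 (ξ - π)) T μ y₀ t y := by
  have hτ : 0 < T - t := sub_pos.mpr ht
  rw [ψfun, selfSimilar, similarityVar, show (-(1:ℝ) / 2) = -(1 / 2) by ring,
    rpow_neg hτ.le, ← sqrt_eq_rpow]
  congr 2
  field_simp
  ring

/-- `ψ` is a backward self-similar solution of the inviscid reduced Prandtl equation
`∂_t ψ − ψ² + (∫_{−∞}^y ψ)·∂_y ψ = 0`, blowing up at time `T`. -/
theorem stmt9 (T μ y₀ : ℝ) (hμ : 0 < μ) :
    ∀ t < T, ∀ y : ℝ,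
      DifferentiableAt ℝ (fun s => ψfun T μ y₀ s y) t ∧
      DifferentiableAt ℝ (fun z => ψfun T μ y₀ t z) y ∧
      deriv (fun s => ψfun T μ y₀ s y) t - ψfun T μ y₀ t y ^ 2
        + (∫ z in Iic y, ψfun T μ y₀ t z) * deriv (fun z => ψfun T μ y₀ t z) y = 0 := by
  intro t ht y
  have hH (ξ : ℝ) : HasDerivAt (fun ξ => G1 (ξ - π)) (G1deriv (ξ - π)) ξ :=
    (hasDerivAt_G1 _).comp_sub_const ξ π
  have hF (ξ : ℝ) : HasDerivAt (fun ξ => G1primitive (ξ - π)) (G1 (ξ - π)) ξ :=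
    (hasDerivAt_G1primitive _).comp_sub_const ξ π
  have hFbot : Tendsto (fun ξ => G1primitive (ξ - π)) atBot (𝓝 0) :=
    tendsto_G1primitive_atBot.comp (tendsto_atBot_add_const_right _ _ tendsto_id)
  have htime : (fun s => ψfun T μ y₀ s y) =ᶠ[𝓝 t]
      fun s => selfSimilar (fun ξ => G1 (ξ - π)) T μ y₀ s y := by
    filter_upwards [Iio_mem_nhds ht] with s hs using ψfun_eq_selfSimilar hμ.ne' hs y
  have hspace : (fun z => ψfun T μ y₀ t z) = selfSimilar (fun ξ => G1 (ξ - π)) T μ y₀ t :=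
    funext (ψfun_eq_selfSimilar hμ.ne' ht)
  refine ⟨((hasDerivAt_selfSimilar_time hH ht).congr_of_eventuallyEq htime).differentiableAt,
    hspace ▸ (hasDerivAt_selfSimilar_space hH).differentiableAt, ?_⟩
  rw [htime.deriv_eq, hspace, ψfun_eq_selfSimilar hμ.ne' ht,
    selfSimilar_residual_eq hH hF (integrable_G1.comp_sub_right π) hFbot hμ ht]
  exact mul_eq_zero_of_right _ (by simpa using G1_profile_eq (similarityVar T μ y₀ t y - π))
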